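/- arXiv:2006.16686 — 6 statements merged into one kernel-verified Lean document; each statement's English description precedes it below -/
import Mathlib

section
/- For every natural number n ≥ 1, n! ≤ e · n^(n+1/2) · e^(−n). -/
open Real

/-! The Stirling sequence `n! / (√(2n) (n/e)^n)` is antitone on `n ≥ 1` and equals `e / √2` at
`n = 1`, so `n! ≤ (e / √2) √(2n) (n/e)^n = e n^(n+1/2) e^(-n)`. -/

namespace Stirling

theorem stirlingSeq_le_stirlingSeq_one {n : ℕ} (hn : n ≠ 0) : stirlingSeq n ≤ exp 1 / √2 := by
  obtain ⟨m, rfl⟩ := Nat.exists_eq_succ_of_ne_zero hn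
  simpa [stirlingSeq_one] using stirlingSeq'_antitone (Nat.zero_le m)

theorem factorial_eq_stirlingSeq_mul {n : ℕ} (hn : n ≠ 0) :
    (n.factorial : ℝ) = stirlingSeq n * (√(2 * n) * (n / exp 1) ^ n) := by
  have : 0 < √(2 * n) * (n / exp 1) ^ n := by positivity
  rw [stirlingSeq, div_mul_cancel₀ _ this.ne']

theorem exp_one_div_sqrt_two_mul_eq {n : ℕ} (hn : n ≠ 0) :
    exp 1 / √2 * (√(2 * n) * (n / exp 1) ^ n)
      = exp 1 * (n : ℝ) ^ ((n : ℝ) + 1 / 2) * exp (-(n : ℝ)) := by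
  have hn' : (0 : ℝ) < n := by positivity
  have h_rpow : (n : ℝ) ^ ((n : ℝ) + 1 / 2) = (n : ℝ) ^ n * √n := by
    rw [rpow_add hn', rpow_natCast, ← sqrt_eq_rpow]
  have h_exp : exp (-(n : ℝ)) = (exp 1 ^ n)⁻¹ := by
    rw [exp_neg, ← exp_nat_mul, mul_one]
  rw [sqrt_mul zero_le_two, div_pow, h_rpow, h_exp]
  field_simp

end Stirling

theorem stirling_upper (n : ℕ) (hn : 1 ≤ n) :
    (Nat.factorial n : ℝ) ≤ Real.exp 1 * (n : ℝ) ^ ((n : ℝ) + 1/2) * Real.exp (-(n : ℝ)) := by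
  have hn0 : n ≠ 0 := Nat.one_le_iff_ne_zero.mp hn
  rw [Stirling.factorial_eq_stirlingSeq_mul hn0, ← Stirling.exp_one_div_sqrt_two_mul_eq hn0]
  gcongr
  exact Stirling.stirlingSeq_le_stirlingSeq_one hn0
end

section
/- For every natural number n ≥ 1, n! ≥ √(2π) · n^(n+1/2) · e^(−n). -/
open Real

theorem rpow_add_half_mul_exp_neg {x : ℝ} (hx : 0 ≤ x) :
    x ^ (x + 1/2) * exp (-x) = √x * (x / exp 1) ^ x := by
  rw [rpow_add' hx (by positivity), ← sqrt_eq_rpow, div_rpow hx (exp_pos 1).le, exp_one_rpow,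
    exp_neg]
  ring

theorem stirling_lower_general (n : ℕ) :
    (Nat.factorial n : ℝ) ≥ Real.sqrt (2 * Real.pi) * (n : ℝ) ^ ((n : ℝ) + 1/2) * Real.exp (-(n : ℝ)) := by
  calc √(2 * π) * (n : ℝ) ^ ((n : ℝ) + 1/2) * exp (-(n : ℝ))
      = √(2 * π * n) * (n / exp 1) ^ n := by
        rw [mul_assoc, rpow_add_half_mul_exp_neg n.cast_nonneg, rpow_natCast,
          sqrt_mul' _ n.cast_nonneg]
        ring
    _ ≤ Nat.factorial n := Stirling.le_factorial_stirling n

theorem stirling_lower (n : ℕ) (hn : 1 ≤ n) :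
    (Nat.factorial n : ℝ) ≥ Real.sqrt (2 * Real.pi) * (n : ℝ) ^ ((n : ℝ) + 1/2) * Real.exp (-(n : ℝ)) :=
  stirling_lower_general n
end

section
/- Let ε ∈ (0, 1/2), let n ≥ 1 be a natural number, let c = e/(ε·π), let k = 4·⌈c²·n⁴⌉ and μ = k/2, and let X ~ Bin(k, 1/2). Then Pr[μ − n² ≤ X ≤ μ + n²] ≤ (2e/π)·(1/c) = 2ε. -/
/-!
Each of the `2n² + 1` terms in the window is at most the central one, `C(2μ, μ) / 4^μ`, which is
at most `1 / √(3μ + 1)`: the ratio of consecutive central terms is `(2m + 1) / (2m + 2)`, and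
`((2m + 1) / (2m + 2))² ≤ (3m + 1) / (3m + 4)`. As `3μ + 1 ≥ 6 c² n⁴`, the window has mass at most
`3 n² / (√6 c n²) = (3 / √6) / c`, and `3 / √6 < 2e / π`.
-/

open Real Finset

theorem Nat.centralBinom_sq_mul_le_sixteen_pow (n : ℕ) :
    n.centralBinom ^ 2 * (3 * n + 1) ≤ 16 ^ n := by
  induction n with
  | zero => simp
  | succ n ih =>
    have hrec := Nat.succ_mul_centralBinom_succ n
    refine Nat.le_of_mul_le_mul_left ?_ (show 0 < (n + 1) ^ 2 by positivity)
    calc (n + 1) ^ 2 * ((n + 1).centralBinom ^ 2 * (3 * (n + 1) + 1))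
        = ((n + 1) * (n + 1).centralBinom) ^ 2 * (3 * n + 4) := by ring
      _ = 4 * (2 * n + 1) ^ 2 * (3 * n + 4) * n.centralBinom ^ 2 := by rw [hrec]; ring
      _ ≤ 16 * (n + 1) ^ 2 * (n.centralBinom ^ 2 * (3 * n + 1)) := by
          -- `4 (n + 1)² (3n + 1) - (2n + 1)² (3n + 4) = n`
          nlinarith [Nat.zero_le (n * n.centralBinom ^ 2)]
      _ ≤ 16 * (n + 1) ^ 2 * 16 ^ n := by gcongr
      _ = (n + 1) ^ 2 * 16 ^ (n + 1) := by ring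

theorem choose_two_mul_mul_half_pow_le (m l : ℕ) :
    ((2 * m).choose l : ℝ) * (1 / 2) ^ (2 * m) ≤ 1 / √(3 * m + 1) := by
  have hcb : (m.centralBinom : ℝ) ^ 2 * (3 * m + 1) ≤ (4 ^ m) ^ 2 := by
    rw [← pow_mul, mul_comm m, pow_mul]; norm_num
    exact_mod_cast Nat.centralBinom_sq_mul_le_sixteen_pow m
  have hle : ((2 * m).choose l : ℝ) ≤ m.centralBinom := by
    exact_mod_cast Nat.choose_le_centralBinom l m
  calc ((2 * m).choose l : ℝ) * (1 / 2) ^ (2 * m) ≤ m.centralBinom / 4 ^ m := by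
        rw [pow_mul, show ((1 : ℝ) / 2) ^ 2 = 1 / 4 by norm_num, one_div_pow, mul_one_div]
        gcongr
    _ ≤ 1 / √(3 * m + 1) := by
        rw [one_div, ← sqrt_inv, le_sqrt (by positivity) (by positivity), div_pow,
          div_le_iff₀ (by positivity), inv_mul_eq_div, le_div_iff₀ (by positivity)]
        exact hcb

theorem sum_Icc_choose_two_mul_mul_half_pow_le (m r : ℕ) :
    ∑ l ∈ Icc (m - r) (m + r), ((2 * m).choose l : ℝ) * (1 / 2) ^ (2 * m) ≤
      (2 * r + 1) / √(3 * m + 1) := by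
  have hcard : (#(Icc (m - r) (m + r)) : ℝ) ≤ 2 * r + 1 := by
    rw [Nat.card_Icc]; exact_mod_cast (by omega : m + r + 1 - (m - r) ≤ 2 * r + 1)
  calc _ ≤ #(Icc (m - r) (m + r)) • (1 / √(3 * m + 1)) :=
        sum_le_card_nsmul _ _ _ fun l _ => choose_two_mul_mul_half_pow_le m l
    _ ≤ _ := by rw [nsmul_eq_mul, mul_one_div]; gcongr

theorem three_div_sqrt_six_le_two_mul_exp_one_div_pi : 3 / √6 ≤ 2 * exp 1 / π := by
  have hsqrt6 : (2.4 : ℝ) ≤ √6 := by rw [le_sqrt (by norm_num) (by norm_num)]; norm_num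
  rw [div_le_div_iff₀ (by positivity) pi_pos]
  nlinarith [pi_lt_d2, exp_one_gt_d9]

theorem binom_central_mass_le_two_eps_general (ε : ℝ) (hε : 0 < ε)
    (n : ℕ) (hn : 1 ≤ n)
    (c : ℝ) (hc : c = Real.exp 1 / (ε * Real.pi))
    (k : ℕ) (hk : k = 4 * ⌈c ^ 2 * (n : ℝ) ^ 4⌉₊)
    (μ : ℕ) (hμ : μ = k / 2) :
    (∑ l ∈ Finset.Icc (μ - n ^ 2) (μ + n ^ 2), (k.choose l : ℝ) * (1/2) ^ k ≤
      (2 * Real.exp 1 / Real.pi) * (1 / c)) ∧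
    (2 * Real.exp 1 / Real.pi) * (1 / c) = 2 * ε := by
  have hc0 : 0 < c := by rw [hc]; positivity
  refine ⟨?_, by rw [hc]; field_simp⟩
  have hn1 : (1 : ℝ) ≤ n := by exact_mod_cast hn
  have hceil : c ^ 2 * (n : ℝ) ^ 4 ≤ ⌈c ^ 2 * (n : ℝ) ^ 4⌉₊ := Nat.le_ceil _
  have hμ' : (μ : ℝ) = 2 * ⌈c ^ 2 * (n : ℝ) ^ 4⌉₊ := by rw [hμ, hk]; norm_cast; omega
  have hspread : √6 * c * n ^ 2 ≤ √(3 * μ + 1) := by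
    rw [le_sqrt (by positivity) (by positivity), mul_pow, mul_pow, sq_sqrt (by norm_num), hμ']
    nlinarith
  have hwidth : 2 * ((n ^ 2 : ℕ) : ℝ) + 1 ≤ 3 * n ^ 2 := by push_cast; nlinarith
  rw [show k = 2 * μ by omega]
  calc _ ≤ (2 * ((n ^ 2 : ℕ) : ℝ) + 1) / √(3 * μ + 1) :=
        sum_Icc_choose_two_mul_mul_half_pow_le μ _
    _ ≤ 3 * n ^ 2 / (√6 * c * n ^ 2) := by gcongr
    _ = 3 / √6 * (1 / c) := by field_simp
    _ ≤ _ := by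
        gcongr ?_ * _
        exact three_div_sqrt_six_le_two_mul_exp_one_div_pi

theorem binom_central_mass_le_two_eps (ε : ℝ) (hε : 0 < ε) (hε' : ε < 1/2)
    (n : ℕ) (hn : 1 ≤ n)
    (c : ℝ) (hc : c = Real.exp 1 / (ε * Real.pi))
    (k : ℕ) (hk : k = 4 * ⌈c ^ 2 * (n : ℝ) ^ 4⌉₊)
    (μ : ℕ) (hμ : μ = k / 2) :
    (∑ l ∈ Finset.Icc (μ - n ^ 2) (μ + n ^ 2), (k.choose l : ℝ) * (1/2) ^ k ≤
      (2 * Real.exp 1 / Real.pi) * (1 / c)) ∧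
    (2 * Real.exp 1 / Real.pi) * (1 / c) = 2 * ε :=
  binom_central_mass_le_two_eps_general ε hε n hn c hc k hk μ hμ
end

section
/- Let ε ∈ (0, 1/2), n ≥ 1, c = e/(ε·π), k = 4·⌈c²·n⁴⌉, μ = k/2, and X ~ Bin(k, 1/2). Then Pr[X > μ + n²] ≥ 1/2 − ε. -/
/-!
Write `k = 2j` with `j = 2⌈c²n⁴⌉`. Reflecting `l ↦ 2j - l` maps the upper tail beyond `j + n²`
onto the lower tail below `j - n²`, so `2 · upper tail + central window ≥ 1`. Each of the
`2n² + 1` terms of the window is at most `C(2j, j) / 4ʲ ≤ 1 / √(3j + 1)`, and the choice of `c`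
makes `(2n² + 1) / √(3j + 1) ≤ 2ε`.
-/

open Real Finset

theorem Nat.centralBinom_sq_mul_le (j : ℕ) : j.centralBinom ^ 2 * (3 * j + 1) ≤ 16 ^ j := by
  induction j with
  | zero => simp
  | succ j ih =>
    refine Nat.le_of_mul_le_mul_left ?_ (by positivity : 0 < (j + 1) ^ 2)
    calc (j + 1) ^ 2 * ((j + 1).centralBinom ^ 2 * (3 * (j + 1) + 1))
        = ((j + 1) * (j + 1).centralBinom) ^ 2 * (3 * j + 4) := by ring
      _ = j.centralBinom ^ 2 * (4 * (2 * j + 1) ^ 2 * (3 * j + 4)) := by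
          rw [Nat.succ_mul_centralBinom_succ]; ring
      _ ≤ j.centralBinom ^ 2 * (16 * (j + 1) ^ 2 * (3 * j + 1)) := by
          exact Nat.mul_le_mul_left _ (by nlinarith)
      _ = 16 * (j + 1) ^ 2 * (j.centralBinom ^ 2 * (3 * j + 1)) := by ring
      _ ≤ 16 * (j + 1) ^ 2 * 16 ^ j := by gcongr
      _ = (j + 1) ^ 2 * 16 ^ (j + 1) := by ring

theorem Nat.centralBinom_le_four_pow_div_sqrt (j : ℕ) :
    (j.centralBinom : ℝ) ≤ 4 ^ j / √(3 * j + 1) := by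
  rw [le_div_iff₀ (by positivity)]
  refine le_of_pow_le_pow_left₀ two_ne_zero (by positivity) ?_
  rw [mul_pow, sq_sqrt (by positivity), ← pow_mul, mul_comm j 2, pow_mul]
  exact_mod_cast j.centralBinom_sq_mul_le

theorem Nat.sum_choose_Ioc_eq_sum_choose_range (j r : ℕ) :
    ∑ l ∈ Ioc (j + r) (2 * j), (2 * j).choose l = ∑ l ∈ range (j - r), (2 * j).choose l := by
  refine sum_nbij' (2 * j - ·) (2 * j - ·) ?_ ?_ ?_ ?_
    fun l hl => (Nat.choose_symm (mem_Ioc.1 hl).2).symm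
  all_goals intro l hl; simp only [mem_Ioc, mem_range] at hl ⊢; omega

theorem Nat.four_pow_le_two_mul_sum_choose_Ioc_add_sum_choose_Icc (j r : ℕ) :
    4 ^ j ≤ 2 * ∑ l ∈ Ioc (j + r) (2 * j), (2 * j).choose l
      + ∑ l ∈ Icc (j - r) (j + r), (2 * j).choose l := by
  have hdisj₁ : Disjoint (range (j - r)) (Icc (j - r) (j + r)) :=
    disjoint_left.2 fun l h₁ h₂ => by simp only [mem_range, mem_Icc] at h₁ h₂; omega
  have hdisj₂ : Disjoint (range (j - r) ∪ Icc (j - r) (j + r)) (Ioc (j + r) (2 * j)) :=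
    disjoint_left.2 fun l h₁ h₂ => by
      simp only [mem_union, mem_range, mem_Icc, mem_Ioc] at h₁ h₂; omega
  calc 4 ^ j = ∑ l ∈ range (2 * j + 1), (2 * j).choose l := by
        rw [Nat.sum_range_choose, pow_mul]; norm_num
    _ ≤ ∑ l ∈ range (j - r) ∪ Icc (j - r) (j + r) ∪ Ioc (j + r) (2 * j), (2 * j).choose l :=
        sum_le_sum_of_subset fun l hl => by
          simp only [mem_union, mem_range, mem_Icc, mem_Ioc] at hl ⊢; omega
    _ = _ := by
        rw [sum_union hdisj₂, sum_union hdisj₁, ← Nat.sum_choose_Ioc_eq_sum_choose_range]; ring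

theorem Nat.sum_choose_Icc_le (j r : ℕ) :
    (∑ l ∈ Icc (j - r) (j + r), (2 * j).choose l : ℝ) ≤ (2 * r + 1) * (4 ^ j / √(3 * j + 1)) := by
  have hcard : (#(Icc (j - r) (j + r)) : ℝ) ≤ 2 * r + 1 := by
    rw [Nat.card_Icc]; exact_mod_cast (by omega : j + r + 1 - (j - r) ≤ 2 * r + 1)
  calc (∑ l ∈ Icc (j - r) (j + r), (2 * j).choose l : ℝ)
      ≤ #(Icc (j - r) (j + r)) • (j.centralBinom : ℝ) :=
        sum_le_card_nsmul _ _ _ fun l _ => by exact_mod_cast Nat.choose_le_centralBinom l j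
    _ ≤ (2 * r + 1) * (4 ^ j / √(3 * j + 1)) := by
        rw [nsmul_eq_mul]
        gcongr
        exact Nat.centralBinom_le_four_pow_div_sqrt j

theorem binomial_upper_tail_ge (j r : ℕ) :
    1 / 2 - (2 * r + 1) / (2 * √(3 * j + 1))
      ≤ ∑ l ∈ Ioc (j + r) (2 * j), ((2 * j).choose l : ℝ) * (1 / 2) ^ (2 * j) := by
  have hsplit : (4 : ℝ) ^ j ≤ 2 * ∑ l ∈ Ioc (j + r) (2 * j), ((2 * j).choose l : ℝ)
      + ∑ l ∈ Icc (j - r) (j + r), ((2 * j).choose l : ℝ) := by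
    exact_mod_cast Nat.four_pow_le_two_mul_sum_choose_Ioc_add_sum_choose_Icc j r
  have hwindow := Nat.sum_choose_Icc_le j r
  have h4 : (0 : ℝ) < 4 ^ j := by positivity
  have hs : 0 < √(3 * (j : ℝ) + 1) := by positivity
  have hhalf : ((1 : ℝ) / 2) ^ (2 * j) = 1 / 4 ^ j := by rw [one_div_pow, pow_mul]; norm_num
  rw [← sum_mul, hhalf, ← div_eq_mul_one_div, le_div_iff₀ h4]
  have hmul : (2 * r + 1) / (2 * √(3 * j + 1)) * 4 ^ j
      = (2 * r + 1) * (4 ^ j / √(3 * j + 1)) / 2 := by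
    field_simp
  linarith

theorem window_div_sqrt_le (ε x j : ℝ) (hε : 0 < ε) (hx : 1 ≤ x)
    (hj : 2 * (exp 1 / (ε * π)) ^ 2 * x ^ 2 ≤ j) :
    (2 * x + 1) / (2 * √(3 * j + 1)) ≤ ε := by
  have he : (2.7 : ℝ) < exp 1 := by linarith [exp_one_gt_d9]
  have hπ : π < 3.15 := by linarith [pi_lt_d2]
  -- `(εc)² = (e/π)² ≥ 3/8` gives `12ε²j ≥ 24(εc)²x² ≥ 9x² ≥ (2x + 1)²`.
  have hconst : 3 / 8 ≤ (exp 1 / π) ^ 2 := by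
    rw [div_pow, le_div_iff₀ (by positivity)]; nlinarith [pi_pos]
  have hεc : (exp 1 / (ε * π)) ^ 2 * ε ^ 2 = (exp 1 / π) ^ 2 := by field_simp
  have hj0 : 0 ≤ j := le_trans (by positivity) hj
  have hs : 0 < √(3 * j + 1) := sqrt_pos.2 (by linarith)
  have hsq : (2 * x + 1) ^ 2 ≤ (ε * (2 * √(3 * j + 1))) ^ 2 := by
    rw [mul_pow, mul_pow, sq_sqrt (by linarith)]
    nlinarith [mul_le_mul_of_nonneg_left hj (sq_nonneg ε)]
  rw [div_le_iff₀ (by positivity)]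
  exact le_of_pow_le_pow_left₀ two_ne_zero (by positivity) hsq

theorem binom_tail_ge_general (ε : ℝ) (hε : 0 < ε)
    (n : ℕ) (hn : 1 ≤ n)
    (c : ℝ) (hc : c = Real.exp 1 / (ε * Real.pi))
    (k : ℕ) (hk : k = 4 * ⌈c ^ 2 * (n : ℝ) ^ 4⌉₊)
    (μ : ℕ) (hμ : μ = k / 2) :
    ∑ l ∈ Finset.Ioc (μ + n ^ 2) k, (k.choose l : ℝ) * (1/2) ^ k ≥ 1/2 - ε := by
  set m := ⌈c ^ 2 * (n : ℝ) ^ 4⌉₊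
  obtain rfl : μ = 2 * m := by omega
  obtain rfl : k = 2 * (2 * m) := by omega
  have hx : (1 : ℝ) ≤ (n : ℝ) ^ 2 := one_le_pow₀ (by exact_mod_cast hn)
  have hj : 2 * (exp 1 / (ε * π)) ^ 2 * ((n : ℝ) ^ 2) ^ 2 ≤ ((2 * m : ℕ) : ℝ) := by
    rw [← hc]; push_cast; linarith [Nat.le_ceil (c ^ 2 * (n : ℝ) ^ 4)]
  have hratio := window_div_sqrt_le ε _ _ hε hx hj
  have htail := binomial_upper_tail_ge (2 * m) (n ^ 2)
  push_cast at hratio htail ⊢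
  linarith

theorem binom_tail_ge (ε : ℝ) (hε : 0 < ε) (hε' : ε < 1/2)
    (n : ℕ) (hn : 1 ≤ n)
    (c : ℝ) (hc : c = Real.exp 1 / (ε * Real.pi))
    (k : ℕ) (hk : k = 4 * ⌈c ^ 2 * (n : ℝ) ^ 4⌉₊)
    (μ : ℕ) (hμ : μ = k / 2) :
    ∑ l ∈ Finset.Ioc (μ + n ^ 2) k, (k.choose l : ℝ) * (1/2) ^ k ≥ 1/2 - ε :=
  binom_tail_ge_general ε hε n hn c hc k hk μ hμ
end

section
/- For every real m ≥ 3, (1/2 + 1/(4m) − 1/(4m²)) · ((99/100)·e^(−1/50))^(4/m) > 1/2. -/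
/-!
Write `c = (99/100) e^(-1/50)`. Since `log (99/100) ≥ 1 - 100/99`, we have
`log c ≥ -149/4950`, and the tangent-line bound `e^x ≥ 1 + x` gives
`c^(4/m) ≥ 1 - (149/4950)(4/m)`. Multiplying out, the claim reduces to the
quadratic `1879 m² - 2773 m + 298 > 0`, which holds for `m ≥ 3`.
-/

open Real

lemma one_add_mul_log_le_rpow {c : ℝ} (hc : 0 < c) (t : ℝ) : 1 + t * log c ≤ c ^ t := by
  rw [rpow_def_of_pos hc, mul_comm t]
  linarith [add_one_le_exp (log c * t)]

lemma log_fair_choice_base_ge : -(149 / 4950) ≤ log ((99 / 100) * exp (-(1 / 50))) := by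
  rw [log_mul (by norm_num) (exp_ne_zero _), log_exp]
  have h := one_sub_inv_le_log_of_pos (by norm_num : (0 : ℝ) < 99 / 100)
  norm_num at h ⊢
  linarith

lemma fair_choice_prefactor_pos {m : ℝ} (hm : 1 ≤ m) : 0 < 1/2 + 1/(4 * m) - 1/(4 * m ^ 2) := by
  have h : 1/(4 * m ^ 2) ≤ 1/(4 * m) :=
    one_div_le_one_div_of_le (by positivity) (by nlinarith)
  linarith

lemma fair_choice_linearized_gt {m : ℝ} (hm : 3 ≤ m) :
    1/2 < (1/2 + 1/(4 * m) - 1/(4 * m ^ 2)) * (1 - (149/4950) * (4 / m)) := by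
  have hm0 : 0 < m := by linarith
  have key : (1/2 + 1/(4 * m) - 1/(4 * m ^ 2)) * (1 - (149/4950) * (4 / m)) - 1/2
      = (1879 * m ^ 2 - 2773 * m + 298) / (9900 * m ^ 3) := by
    field_simp
    ring
  have hquad : 0 < 1879 * m ^ 2 - 2773 * m + 298 := by nlinarith
  linarith [div_pos hquad (by positivity : (0 : ℝ) < 9900 * m ^ 3)]

theorem fair_choice_key_ineq (m : ℝ) (hm : 3 ≤ m) :
    (1/2 + 1/(4 * m) - 1/(4 * m ^ 2)) * ((99/100) * Real.exp (-(1/50))) ^ (4 / m) >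
      1/2 := by
  have hm0 : 0 < m := by linarith
  have hA := fair_choice_prefactor_pos (by linarith : (1 : ℝ) ≤ m)
  calc 1/2 < (1/2 + 1/(4 * m) - 1/(4 * m ^ 2)) * (1 - (149/4950) * (4 / m)) :=
        fair_choice_linearized_gt hm
    _ ≤ (1/2 + 1/(4 * m) - 1/(4 * m ^ 2)) * (1 + 4 / m * log ((99/100) * exp (-(1/50)))) := by
        gcongr
        have := mul_le_mul_of_nonneg_left log_fair_choice_base_ge (by positivity : (0 : ℝ) ≤ 4 / m)
        linarith
    _ ≤ (1/2 + 1/(4 * m) - 1/(4 * m ^ 2)) * ((99/100) * exp (-(1/50))) ^ (4 / m) := by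
        gcongr
        exact one_add_mul_log_le_rpow (by positivity) _
end

section
/- Let m ≥ 3, let ε = 1/(100·m·log₂ m), let N = 2^l with 2m² ≤ N ≤ 4m², and let G ⊆ {0,…,m−1} with |G| > m/2. Let b₁,…,b_l be independent bits each satisfying Pr[b_j = b] ≥ 1/2 − ε for both b ∈ {0,1}, and let r ∈ {0,…,N−1} be the number with binary digits b₁…b_l. Then Pr[(r mod m) ∈ G] ≥ (1 − m/N)·(1/2 + 1/(2m))·(1 − 2ε)^(log₂ N), and this quantity is strictly greater than 1/2. -/
/-!
Each value `s < N` of `r` is forced by one pattern of the independent digits, so it has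
probability at least `(1/2 - ε)^l = (1 - 2ε)^l / N`. Every complete block of `m` consecutive
integers contains `|G| ≥ (m + 1)/2` residues in `G`, which gives at least `(N - m)(1/2 + 1/(2m))`
favourable values. For the final inequality, `m / N ≤ 1/(2m)`, and Bernoulli's inequality with
`l ≤ 4 log₂ m` gives `(1 - 2ε)^l ≥ 1 - 2/(25m)`; the resulting rational function of `m` exceeds
`1/2` for `m ≥ 3`.
-/

open MeasureTheory ProbabilityTheory Finset Real

namespace Nat

theorem sum_range_testBit_mul_two_pow (l s : ℕ) :
    ∑ i ∈ range l, (if s.testBit i then 2 ^ i else 0) = s % 2 ^ l := by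
  induction l with
  | zero => simp [Nat.mod_one]
  | succ n ih =>
    rw [sum_range_succ, ih, Nat.mod_pow_succ, Nat.testBit_eq_decide_div_mod_eq]
    rcases Nat.mod_two_eq_zero_or_one (s / 2 ^ n) with h | h <;> simp [h]

theorem sum_fin_testBit_rev {l s : ℕ} (hs : s < 2 ^ l) :
    ∑ j : Fin l, (if s.testBit (l - 1 - j) then 2 ^ (l - 1 - (j : ℕ)) else 0) = s := by
  rw [Fin.sum_univ_eq_sum_range (fun j => if s.testBit (l - 1 - j) then 2 ^ (l - 1 - j) else 0),
    sum_range_reflect (fun i => if s.testBit i then 2 ^ i else 0) l,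
    sum_range_testBit_mul_two_pow, Nat.mod_eq_of_lt hs]

theorem div_le_card_filter_mod_eq (N : ℕ) {m g : ℕ} (hg : g < m) :
    N / m ≤ #{x ∈ range N | x % m = g} := by
  have h := count_modEq_card (b := N) (by omega : 0 < m) g
  simp only [count_eq_card_filter_range, Nat.ModEq, Nat.mod_eq_of_lt hg] at h
  omega

theorem card_mul_div_le_card_filter_mod_mem (N : ℕ) {m : ℕ} {G : Finset ℕ} (hG : G ⊆ range m) :
    #G * (N / m) ≤ #{x ∈ range N | x % m ∈ G} := by
  calc #G * (N / m) = ∑ _g ∈ G, N / m := by rw [sum_const, smul_eq_mul]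
    _ ≤ ∑ g ∈ G, #{x ∈ {x ∈ range N | x % m ∈ G} | x % m = g} := by
      refine sum_le_sum fun g hg => ?_
      rw [filter_filter, filter_congr fun x _ => ⟨And.right, fun h => ⟨h ▸ hg, h⟩⟩]
      exact div_le_card_filter_mod_eq N (mem_range.1 (hG hg))
    _ = #{x ∈ range N | x % m ∈ G} :=
      (card_eq_sum_card_fiberwise fun x hx => (mem_filter.1 hx).2).symm

end Nat

theorem sub_mul_le_card_filter_mod_mem (N : ℕ) {m : ℕ} {G : Finset ℕ} (hG : G ⊆ range m)
    (hGcard : m < 2 * #G) :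
    ((N : ℝ) - m) * (1 / 2 + 1 / (2 * m)) ≤ #{x ∈ range N | x % m ∈ G} := by
  have hm : 0 < m := by
    have := card_le_card hG
    rw [card_range] at this
    omega
  have hq : (N : ℝ) - m ≤ m * (N / m : ℕ) := by
    have := Nat.lt_div_mul_add (a := N) hm
    rw [sub_le_iff_le_add, mul_comm]
    exact_mod_cast this.le
  have hG' : (m : ℝ) + 1 ≤ 2 * #G := by exact_mod_cast hGcard
  calc ((N : ℝ) - m) * (1 / 2 + 1 / (2 * m)) = (N - m) * (m + 1) / (2 * m) := by
        field_simp
    _ ≤ m * (N / m : ℕ) * (2 * #G) / (2 * m) := by gcongr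
    _ = #G * (N / m : ℕ) := by field_simp
    _ ≤ #{x ∈ range N | x % m ∈ G} := by
      exact_mod_cast Nat.card_mul_div_le_card_filter_mod_mem N hG

section Probability

variable {Ω : Type*} [MeasurableSpace Ω] {P : Measure Ω}

theorem pow_card_le_measureReal_forall_eq {ι β : Type*} [Fintype ι] [MeasurableSpace β]
    [MeasurableSingletonClass β] {b : ι → Ω → β} (hindep : iIndepFun b P) {p : ℝ} (hp : 0 ≤ p)
    (hbias : ∀ j c, p ≤ P.real {ω | b j ω = c}) (v : ι → β) :
    p ^ Fintype.card ι ≤ P.real {ω | ∀ j, b j ω = v j} := by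
  have hinter : {ω | ∀ j, b j ω = v j} = ⋂ j, b j ⁻¹' {v j} := by ext; simp
  rw [hinter, measureReal_def,
    hindep.meas_iInter fun j => ⟨{v j}, measurableSet_singleton _, rfl⟩, ENNReal.toReal_prod,
    ← card_univ, ← prod_const]
  exact prod_le_prod (fun _ _ => hp) fun j _ => hbias j (v j)

theorem card_mul_le_measureReal_preimage [IsFiniteMeasure P] {α : Type*} [MeasurableSpace α]
    [MeasurableSingletonClass α] {X : Ω → α} (hX : Measurable X) {S : Finset α} {p : ℝ}
    (h : ∀ s ∈ S, p ≤ P.real (X ⁻¹' {s})) :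
    #S * p ≤ P.real (X ⁻¹' S) := by
  rw [← sum_measureReal_preimage_singleton S fun s _ => hX (measurableSet_singleton s)]
  simpa using card_nsmul_le_sum S _ p h

theorem pow_le_measureReal_eq_of_binary_digits [IsFiniteMeasure P] {l : ℕ} {b : Fin l → Ω → Bool}
    (hindep : iIndepFun b P) {p : ℝ} (hp : 0 ≤ p) (hbias : ∀ j c, p ≤ P.real {ω | b j ω = c})
    {r : Ω → ℕ} (hr : ∀ ω, r ω = ∑ j : Fin l, (if b j ω then 2 ^ (l - 1 - (j : ℕ)) else 0))
    {s : ℕ} (hs : s < 2 ^ l) :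
    p ^ l ≤ P.real {ω | r ω = s} := by
  calc p ^ l = p ^ Fintype.card (Fin l) := by rw [Fintype.card_fin]
    _ ≤ P.real {ω | ∀ j, b j ω = s.testBit (l - 1 - j)} :=
      pow_card_le_measureReal_forall_eq hindep hp hbias _
    _ ≤ P.real {ω | r ω = s} := measureReal_mono fun ω hω => by
      simp only [Set.mem_ofPred_eq] at hω ⊢
      simp only [hr, hω, Nat.sum_fin_testBit_rev hs]

end Probability

theorem one_le_logb_two {x : ℝ} (hx : 2 ≤ x) : 1 ≤ logb 2 x :=
  (le_logb_iff_rpow_le one_lt_two (by linarith)).2 (by simpa using hx)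

theorem one_div_hundred_mul_logb_two_le_half {x : ℝ} (hx : 2 ≤ x) :
    1 / (100 * x * logb 2 x) ≤ 1 / 2 := by
  have hlog := one_le_logb_two hx
  rw [div_le_div_iff₀ (by positivity) two_pos]
  nlinarith

theorem nat_le_four_mul_logb_two {l m : ℕ} (hm : 2 ≤ m) (h : 2 ^ l ≤ 4 * m ^ 2) :
    (l : ℝ) ≤ 4 * logb 2 m := by
  have hlog := one_le_logb_two (by exact_mod_cast hm : (2 : ℝ) ≤ m)
  have hl : (l : ℝ) ≤ logb 2 (4 * m ^ 2) :=
    (le_logb_iff_rpow_le one_lt_two (by positivity)).2 (by rw [rpow_natCast]; exact_mod_cast h)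
  rw [logb_mul (by norm_num) (by positivity), logb_pow, show (4 : ℝ) = 2 ^ 2 by norm_num,
    logb_pow, logb_self_eq_one one_lt_two] at hl
  push_cast at hl
  linarith

theorem one_sub_two_div_le_one_sub_two_mul_pow {m l : ℕ} (hm : 2 ≤ m) (hl : 2 ^ l ≤ 4 * m ^ 2)
    {ε : ℝ} (hε : ε = 1 / (100 * (m : ℝ) * logb 2 m)) :
    1 - 2 / (25 * m) ≤ (1 - 2 * ε) ^ l := by
  have hm' : (2 : ℝ) ≤ m := by exact_mod_cast hm
  have hlog := one_le_logb_two hm'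
  have hε0 : 0 ≤ ε := by rw [hε]; positivity
  have hε1 : ε ≤ 1 / 2 := hε ▸ one_div_hundred_mul_logb_two_le_half hm'
  have hεl : 2 * ε * l ≤ 2 / (25 * m) :=
    calc 2 * ε * l ≤ 2 * ε * (4 * logb 2 m) := by gcongr; exact nat_le_four_mul_logb_two hm hl
      _ = 2 / (25 * m) := by
        rw [hε]
        field_simp
        ring
  have hbernoulli := one_add_mul_le_pow (a := -(2 * ε)) (by linarith) l
  rw [← sub_eq_add_neg] at hbernoulli
  linarith

theorem half_lt_product_of_three_le {x : ℝ} (hx : 3 ≤ x) :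
    1 / 2 < (1 - 1 / (2 * x)) * (1 / 2 + 1 / (2 * x)) * (1 - 2 / (25 * x)) := by
  have h : (1 - 1 / (2 * x)) * (1 / 2 + 1 / (2 * x)) * (1 - 2 / (25 * x)) - 1 / 2
      = (21 * x ^ 2 - 27 * x + 2) / (100 * x ^ 3) := by
    field_simp
    ring
  have h2 : 0 < (21 * x ^ 2 - 27 * x + 2) / (100 * x ^ 3) := by
    apply div_pos <;> nlinarith
  linarith

theorem fair_choice_bound_gt_half {m : ℕ} (hm : 3 ≤ m) {ε : ℝ}
    (hε : ε = 1 / (100 * (m : ℝ) * logb 2 m)) {l N : ℕ} (hN : N = 2 ^ l)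
    (hN1 : 2 * m ^ 2 ≤ N) (hN2 : N ≤ 4 * m ^ 2) :
    1 / 2 < (1 - (m : ℝ) / N) * (1 / 2 + 1 / (2 * m)) * (1 - 2 * ε) ^ l := by
  have hm3 : (3 : ℝ) ≤ m := by exact_mod_cast hm
  have hpow := one_sub_two_div_le_one_sub_two_mul_pow (by omega) (hN ▸ hN2) hε
  have hmN : (m : ℝ) / N ≤ 1 / (2 * m) := by
    have : (2 * m ^ 2 : ℝ) ≤ N := by exact_mod_cast hN1
    rw [div_le_div_iff₀ (by nlinarith) (by positivity)]
    nlinarith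
  have hm2 : 1 / (2 * m) ≤ (1 : ℝ) := by rw [div_le_one (by positivity)]; linarith
  have hm25 : 2 / (25 * m) ≤ (1 : ℝ) := by rw [div_le_one (by positivity)]; linarith
  calc (1 : ℝ) / 2 < (1 - 1 / (2 * m)) * (1 / 2 + 1 / (2 * m)) * (1 - 2 / (25 * m)) :=
        half_lt_product_of_three_le hm3
    _ ≤ (1 - (m : ℝ) / N) * (1 / 2 + 1 / (2 * m)) * (1 - 2 * ε) ^ l := by
      gcongr ?_ * _ * ?_
      case b0 => exact mul_nonneg (by linarith) (by positivity)
      all_goals linarith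

theorem fair_choice_validity
    (Ω : Type*) [MeasurableSpace Ω] (P : Measure Ω) [IsProbabilityMeasure P]
    (m : ℕ) (hm : 3 ≤ m)
    (ε : ℝ) (hε : ε = 1 / (100 * (m : ℝ) * Real.logb 2 m))
    (l N : ℕ) (hN : N = 2 ^ l) (hN1 : 2 * m ^ 2 ≤ N) (hN2 : N ≤ 4 * m ^ 2)
    (G : Finset ℕ) (hG : G ⊆ Finset.range m) (hGcard : (G.card : ℝ) > (m : ℝ) / 2)
    (b : Fin l → Ω → Bool) (hmeas : ∀ j, Measurable (b j))
    (hindep : iIndepFun b P)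
    (hbias : ∀ j : Fin l, ∀ c : Bool, (P {ω | b j ω = c}).toReal ≥ 1/2 - ε)
    (r : Ω → ℕ)
    (hr : ∀ ω, r ω = ∑ j : Fin l, (if b j ω then 2 ^ (l - 1 - (j : ℕ)) else 0)) :
    (P {ω | r ω % m ∈ G}).toReal ≥
      (1 - (m : ℝ) / N) * (1/2 + 1/(2 * m)) * (1 - 2 * ε) ^ (Real.logb 2 N) ∧
    (1 - (m : ℝ) / N) * (1/2 + 1/(2 * m)) * (1 - 2 * ε) ^ (Real.logb 2 N) > 1/2 := by
  have hl : logb 2 N = l := by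
    rw [hN, Nat.cast_pow, Nat.cast_ofNat, logb_pow, logb_self_eq_one one_lt_two, mul_one]
  rw [hl, rpow_natCast]
  refine ⟨?_, fair_choice_bound_gt_half hm hε hN hN1 hN2⟩
  have hε_le : ε ≤ 1 / 2 :=
    hε ▸ one_div_hundred_mul_logb_two_le_half (by exact_mod_cast (by omega : 2 ≤ m))
  have hr_meas : Measurable r := by
    rw [show r = (fun v : Fin l → Bool => ∑ j, if v j then 2 ^ (l - 1 - (j : ℕ)) else 0) ∘
      fun ω j => b j ω from funext hr]
    exact (measurable_of_countable _).comp (measurable_pi_lambda _ hmeas)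
  set S := {x ∈ range N | x % m ∈ G}
  have hprob : #S * (1 / 2 - ε) ^ l ≤ P.real (r ⁻¹' S) :=
    card_mul_le_measureReal_preimage hr_meas fun s hs =>
      pow_le_measureReal_eq_of_binary_digits hindep (by linarith) hbias hr
        (hN ▸ mem_range.1 (mem_filter.1 hs).1)
  have hcount := sub_mul_le_card_filter_mod_mem N hG
    (by exact_mod_cast (by linarith : (m : ℝ) < 2 * #G))
  show _ ≤ P.real _
  calc (1 - (m : ℝ) / N) * (1 / 2 + 1 / (2 * m)) * (1 - 2 * ε) ^ l
      = ((N - m) * (1 / 2 + 1 / (2 * m))) * (1 / 2 - ε) ^ l := by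
        rw [show (1 / 2 - ε) = (1 - 2 * ε) / 2 by ring, div_pow, hN]
        push_cast
        field_simp
    _ ≤ #S * (1 / 2 - ε) ^ l := by gcongr
    _ ≤ P.real (r ⁻¹' S) := hprob
    _ ≤ P.real {ω | r ω % m ∈ G} :=
      measureReal_mono fun ω (hω : r ω ∈ S) => (mem_filter.1 hω).2
end
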